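/- arXiv:2510.24593 — 2 statements merged into one kernel-verified Lean document; each statement's English description precedes it below -/
import Mathlib

section
/- Asymptotics of the order-1 conformal factor near the singularity: as v → (1,0) within ℝ² \ {(1,0), (−1,0)}, the product |v − (1,0)| · f_1(v) converges to 1/4, where f_1(v) = (|e_0(v)| + |e_1(v)|) / (2 l(v)³) + (1/|e_0(v)| + 1/|e_1(v)|) / l(v), with e_0(v) = v − (1,0), e_1(v) = (−1,0) − v, and l(v) = |e_0(v)| + |e_1(v)| + 2. That is, f_1(v) = (1 + o(1)) / (4|v − (1,0)|) as v → (1,0), so that near the singularity the metric f_1(v)⟨·,·⟩ is a perturbation of a standard cone metric with tip at (1,0). -/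
open Filter Topology

noncomputable section

/-- Euclidean space ℝ². -/
abbrev Vec2 := EuclideanSpace ℝ (Fin 2)

/-- The point (1,0) ∈ ℝ². -/
def p₁ : Vec2 := (WithLp.equiv 2 (Fin 2 → ℝ)).symm ![1, 0]

/-- The point (-1,0) ∈ ℝ². -/
def p₂ : Vec2 := (WithLp.equiv 2 (Fin 2 → ℝ)).symm ![-1, 0]

/-- The order-1 conformal factor
`f₁(v) = (|e₀(v)| + |e₁(v)|) / (2 l(v)³) + (1/|e₀(v)| + 1/|e₁(v)|) / l(v)` on
ℝ² \ {(1,0), (-1,0)}, where `e₀(v) = v - (1,0)`, `e₁(v) = (-1,0) - v` and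
`l(v) = |e₀(v)| + |e₁(v)| + 2`. -/
def f₁ (v : Vec2) : ℝ :=
  (‖v - p₁‖ + ‖p₂ - v‖) / (2 * (‖v - p₁‖ + ‖p₂ - v‖ + 2) ^ 3)
    + (1 / ‖v - p₁‖ + 1 / ‖p₂ - v‖) / (‖v - p₁‖ + ‖p₂ - v‖ + 2)

/-!
With `r = ‖e₀ v‖`, `s = ‖e₁ v‖` and `l = r + s + 2`, the `1 / r` singularity of `f₁` is cancelled
by the factor `r`: `r f₁ = r (r + s) / (2 l³) + (1 + r / s) / l`, which is continuous at
`(r, s) = (0, 2)` with value `1 / 4`.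
-/

def conformalFactorOfEdges (r s : ℝ) : ℝ :=
  (r + s) / (2 * (r + s + 2) ^ 3) + (1 / r + 1 / s) / (r + s + 2)

lemma mul_conformalFactorOfEdges {r : ℝ} (hr : r ≠ 0) (s : ℝ) :
    r * conformalFactorOfEdges r s = r * ((r + s) / (2 * (r + s + 2) ^ 3))
      + (1 + r / s) / (r + s + 2) := by
  simp only [conformalFactorOfEdges]
  field_simp

lemma tendsto_mul_conformalFactorOfEdges {α : Type*} {l : Filter α} {r s : α → ℝ} {s₀ : ℝ}
    (hr : Tendsto r l (𝓝 0)) (hs : Tendsto s l (𝓝 s₀)) (hs₀ : 0 < s₀)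
    (hr_ne : ∀ᶠ x in l, r x ≠ 0) :
    Tendsto (fun x => r x * conformalFactorOfEdges (r x) (s x)) l (𝓝 (1 / (s₀ + 2))) := by
  have hl : Tendsto (fun x => r x + s x + 2) l (𝓝 (s₀ + 2)) := by
    simpa using (hr.add hs).add_const 2
  have hvanishing := (hr.mul ((hr.add hs).div ((hl.pow 3).const_mul 2) (by positivity)))
  have hleading := (tendsto_const_nhds (x := (1 : ℝ)).add (hr.div hs hs₀.ne')).div hl
    (by positivity)
  refine Tendsto.congr' ?_ (by simpa using hvanishing.add hleading)
  filter_upwards [hr_ne] with x hx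
  exact (mul_conformalFactorOfEdges hx _).symm

lemma norm_p₂_sub_p₁ : ‖p₂ - p₁‖ = 2 := by
  simp [p₁, p₂, EuclideanSpace.norm_eq, Fin.sum_univ_two]
  norm_num

/-- as `v → (1,0)` within ℝ² \ {(1,0), (-1,0)}, the product
`|v - (1,0)| ⬝ f₁(v)` converges to `1/4`; i.e. `f₁(v) = (1 + o(1)) / (4 |v - (1,0)|)`,
so that near the singularity the metric `f₁ ⟨·,·⟩` is a perturbation of a standard cone
metric with tip at `(1,0)`. -/
theorem conformal_factor_one_asymptotics :
    Tendsto (fun v => ‖v - p₁‖ * f₁ v) (𝓝[({p₁, p₂} : Set Vec2)ᶜ] p₁) (𝓝 (1 / 4)) := by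
  have hr : Tendsto (fun v : Vec2 => ‖v - p₁‖) (𝓝[({p₁, p₂} : Set Vec2)ᶜ] p₁) (𝓝 0) :=
    (tendsto_norm_sub_self p₁).mono_left nhdsWithin_le_nhds
  have hs : Tendsto (fun v : Vec2 => ‖p₂ - v‖) (𝓝[({p₁, p₂} : Set Vec2)ᶜ] p₁) (𝓝 2) := by
    rw [← norm_p₂_sub_p₁]
    exact ((continuous_const.sub continuous_id).norm.tendsto p₁).mono_left nhdsWithin_le_nhds
  have hr_ne : ∀ᶠ v in 𝓝[({p₁, p₂} : Set Vec2)ᶜ] p₁, ‖v - p₁‖ ≠ 0 := by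
    filter_upwards [self_mem_nhdsWithin] with v hv
    simpa [sub_eq_zero] using fun h => hv (Or.inl h)
  have h := tendsto_mul_conformalFactorOfEdges hr hs two_pos hr_ne
  rwa [show (1 : ℝ) / (2 + 2) = 1 / 4 by norm_num] at h

end
end

section
/- Asymptotics of the order-2 conformal factor near the singularity: as v → (1,0) within ℝ² \ {(1,0), (−1,0)}, the product |v − (1,0)|² · f_2(v) converges to 8, where f_2(v) = (|e_0(v)| + |e_1(v)|) / (2 l(v)³) + ( 2/(|e_0(v)|²(|e_0(v)| + 2)) + 2(|e_0(v)| + |e_1(v)|)/(|e_0(v)|²|e_1(v)|²) + 2/(|e_1(v)|²(|e_1(v)| + 2)) ) · l(v), with e_0(v) = v − (1,0), e_1(v) = (−1,0) − v, and l(v) = |e_0(v)| + |e_1(v)| + 2. That is, f_2(v) = (8 + o(1)) / |v − (1,0)|² as v → (1,0), so that near the singularity the metric f_2(v)⟨·,·⟩ is a perturbation of a cylinder metric. -/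
open Filter Topology

noncomputable section

/-- The order-2 conformal factor
`f₂(v) = (|e₀| + |e₁|)/(2 l³) + (2/(|e₀|²(|e₀|+2)) + 2(|e₀|+|e₁|)/(|e₀|²|e₁|²)
+ 2/(|e₁|²(|e₁|+2))) l` on ℝ² \ {(1,0), (-1,0)}, where `e₀(v) = v - (1,0)`,
`e₁(v) = (-1,0) - v` and `l(v) = |e₀(v)| + |e₁(v)| + 2`. -/
def f₂ (v : Vec2) : ℝ :=
  (‖v - p₁‖ + ‖p₂ - v‖) / (2 * (‖v - p₁‖ + ‖p₂ - v‖ + 2) ^ 3)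
    + (2 / (‖v - p₁‖ ^ 2 * (‖v - p₁‖ + 2))
        + 2 * (‖v - p₁‖ + ‖p₂ - v‖) / (‖v - p₁‖ ^ 2 * ‖p₂ - v‖ ^ 2)
        + 2 / (‖p₂ - v‖ ^ 2 * (‖p₂ - v‖ + 2)))
      * (‖v - p₁‖ + ‖p₂ - v‖ + 2)

/-- as `v → (1,0)` within ℝ² \ {(1,0), (-1,0)}, the product
`|v - (1,0)|² ⬝ f₂(v)` converges to `8`; i.e. `f₂(v) = (8 + o(1)) / |v - (1,0)|²`, so
that near the singularity the metric `f₂ ⟨·,·⟩` is a perturbation of a cylinder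
metric. -/
theorem conformal_factor_two_asymptotics :
    Tendsto (fun v => ‖v - p₁‖ ^ 2 * f₂ v) (𝓝[({p₁, p₂} : Set Vec2)ᶜ] p₁) (𝓝 8) := by
  set g : Vec2 → ℝ := fun v =>
    ‖v - p₁‖ ^ 2 * ((‖v - p₁‖ + ‖p₂ - v‖) / (2 * (‖v - p₁‖ + ‖p₂ - v‖ + 2) ^ 3))
      + (2 / (‖v - p₁‖ + 2)
          + 2 * (‖v - p₁‖ + ‖p₂ - v‖) / ‖p₂ - v‖ ^ 2
          + 2 * ‖v - p₁‖ ^ 2 / (‖p₂ - v‖ ^ 2 * (‖p₂ - v‖ + 2)))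
        * (‖v - p₁‖ + ‖p₂ - v‖ + 2) with hg
  have heq : ∀ v ∈ ({p₁, p₂} : Set Vec2)ᶜ, ‖v - p₁‖ ^ 2 * f₂ v = g v := by
    intro v hv
    simp only [Set.mem_compl_iff, Set.mem_insert_iff, Set.mem_singleton_iff, not_or] at hv
    have ha : ‖v - p₁‖ ≠ 0 := by
      simpa [sub_eq_zero] using hv.1
    have hb : ‖p₂ - v‖ ≠ 0 := by
      simpa [sub_eq_zero] using (Ne.symm hv.2)
    have ha2 : ‖v - p₁‖ + 2 ≠ 0 := by positivity
    have hb2 : ‖p₂ - v‖ + 2 ≠ 0 := by positivity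
    have hl : ‖v - p₁‖ + ‖p₂ - v‖ + 2 ≠ 0 := by positivity
    simp only [f₂, hg]
    field_simp
  have hpn : ‖p₂ - p₁‖ = 2 := by
    have h4 : ((-1:ℝ) - 1) ^ 2 = 2 ^ 2 := by norm_num
    simp [EuclideanSpace.norm_eq, p₁, p₂, Fin.sum_univ_two, h4,
      Real.sqrt_sq (by norm_num : (0:ℝ) ≤ 2)]
  have ha : Tendsto (fun v : Vec2 => ‖v - p₁‖) (𝓝[({p₁, p₂} : Set Vec2)ᶜ] p₁) (𝓝 0) := by
    have hc : Continuous (fun v : Vec2 => ‖v - p₁‖) := (continuous_id.sub continuous_const).norm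
    have := hc.tendsto p₁
    simp only [sub_self, norm_zero] at this
    exact this.mono_left nhdsWithin_le_nhds
  have hb : Tendsto (fun v : Vec2 => ‖p₂ - v‖) (𝓝[({p₁, p₂} : Set Vec2)ᶜ] p₁) (𝓝 2) := by
    have hc : Continuous (fun v : Vec2 => ‖p₂ - v‖) := (continuous_const.sub continuous_id).norm
    have := hc.tendsto p₁
    rw [hpn] at this
    exact this.mono_left nhdsWithin_le_nhds
  have hgt : Tendsto g (𝓝[({p₁, p₂} : Set Vec2)ᶜ] p₁) (𝓝 8) := by
    have h8 : (8:ℝ) = 0 ^ 2 * ((0 + 2) / (2 * (0 + 2 + 2) ^ 3))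
        + (2 / (0 + 2) + 2 * (0 + 2) / 2 ^ 2 + 2 * 0 ^ 2 / (2 ^ 2 * (2 + 2)))
          * (0 + 2 + 2) := by norm_num
    rw [hg, h8]
    exact ((ha.pow 2).mul ((ha.add hb).div ((((ha.add hb).add tendsto_const_nhds).pow 3).const_mul 2)
        (by norm_num))).add
      ((((tendsto_const_nhds.div (ha.add tendsto_const_nhds) (by norm_num)).add
          (((ha.add hb).const_mul 2).div (hb.pow 2) (by norm_num))).add
        (((ha.pow 2).const_mul 2).div ((hb.pow 2).mul (hb.add tendsto_const_nhds)) (by norm_num))).mul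
        ((ha.add hb).add tendsto_const_nhds))
  exact hgt.congr' (eventually_nhdsWithin_of_forall fun v hv => (heq v hv).symm)
end
end
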